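/- arXiv:2505.03904 — 2 statements merged into one kernel-verified Lean document; each statement's English description precedes it below -/
import Mathlib

section
/- Let V be a finite-dimensional complex Hermitian space with orthogonal decomposition V = V₁ ⊕ ⋯ ⊕ V_m, and let H° = H₁° × ⋯ × H_m° ⊂ U(V) where each Hᵢ° acts irreducibly and non-trivially on Vᵢ and trivially on V_j for j ≠ i. Then the quotient group N_{U(V)}(H°) / (N_{U(V₁)}(H₁°) × ⋯ × N_{U(V_m)}(H_m°)) is finite of order at most m!. -/
/-!
The blocks `Vᵢ` are exactly the minimal `H°`-invariant subspaces of `V`. A minimal invariant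
subspace `U` projects onto some `V_k` by irreducibility; since `H_k°` moves a vector of `V_k`,
some `h z - z` with `z ∈ U` is a nonzero vector of `U ∩ V_k`, so minimality forces `U = V_k`.
The normalizer of `H°` permutes the minimal invariant subspaces, hence the blocks, which gives a
homomorphism `N_{U(V)}(H°) → Sₘ`. An element of its kernel preserves every block, so it is block
diagonal, and its blocks normalize the `Hᵢ°`. The product of the normalizers therefore contains the
kernel and has index dividing the order of the image, which is at most `m!`.
-/

/-- The block-diagonal embedding of a product of unitary groups into the unitary group of
the orthogonal direct sum `PiLp 2 V`. -/
noncomputable def blockDiagEmbed {m : ℕ} (V : Fin m → Type*)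
    [∀ i, NormedAddCommGroup (V i)] [∀ i, InnerProductSpace ℂ (V i)] :
    (∀ i, (V i ≃ₗᵢ[ℂ] V i)) →* (PiLp 2 V ≃ₗᵢ[ℂ] PiLp 2 V) where
  toFun u := LinearIsometryEquiv.piLpCongrRight 2 u
  map_one' := by ext x; rfl
  map_mul' a b := by ext x; rfl

namespace Subgroup

variable {G Q : Type*} [Group G] [Group Q]

theorem index_ne_zero_and_le_card_of_ker_le [Finite Q] (φ : G →* Q) {K : Subgroup G}
    (h : φ.ker ≤ K) : K.index ≠ 0 ∧ K.index ≤ Nat.card Q := by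
  have hdvd : K.index ∣ Nat.card φ.range := index_ker φ ▸ index_dvd_of_le h
  have hpos : 0 < Nat.card φ.range := Nat.card_pos
  exact ⟨ne_zero_of_dvd_ne_zero hpos.ne' hdvd,
    (Nat.le_of_dvd hpos hdvd).trans φ.range.card_le_card_group⟩

theorem mem_normalizer_of_map_mem_normalizer {f : G →* Q} (hf : Function.Injective f)
    {K : Subgroup G} {g : G} (hg : f g ∈ normalizer (K.map f : Set Q)) :
    g ∈ normalizer (K : Set G) := by
  simpa only [comap_map_eq_self_of_injective hf] using le_normalizer_comap f hg

variable {ι : Type*} [DecidableEq ι] {H : ι → Type*} [∀ i, Group (H i)]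

theorem conj_apply_mem_of_mem_normalizer_pi {K : ∀ i, Subgroup (H i)} {u : ∀ i, H i}
    (hu : u ∈ normalizer (pi Set.univ K : Set (∀ i, H i))) (i : ι) {n : H i} (hn : n ∈ K i) :
    u i * n * (u i)⁻¹ ∈ K i := by
  have hsingle : Pi.mulSingle i n ∈ pi Set.univ K := fun j _ => by
    rcases eq_or_ne j i with rfl | hj
    · simpa using hn
    · simp [Pi.mulSingle_eq_of_ne hj]
  simpa using (mem_normalizer_iff.mp hu _).mp hsingle i (Set.mem_univ i)

theorem normalizer_pi_le (K : ∀ i, Subgroup (H i)) :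
    normalizer (pi Set.univ K : Set (∀ i, H i)) ≤
      pi Set.univ fun i => normalizer (K i : Set (H i)) := by
  intro u hu i _
  refine mem_normalizer_iff.mpr fun n => ⟨conj_apply_mem_of_mem_normalizer_pi hu i, fun hn => ?_⟩
  simpa [mul_assoc] using conj_apply_mem_of_mem_normalizer_pi (inv_mem hu) i hn

end Subgroup

namespace Submodule

variable {R E : Type*} [Semiring R] [SeminormedAddCommGroup E] [Module R E]
  (G : Subgroup (E ≃ₗᵢ[R] E))

def IsInvariant (U : Submodule R E) : Prop := ∀ g ∈ G, ∀ x ∈ U, g x ∈ U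

def IsMinimalInvariant (U : Submodule R E) : Prop :=
  U ≠ ⊥ ∧ U.IsInvariant G ∧ ∀ T ≤ U, T.IsInvariant G → T = ⊥ ∨ T = U

variable {G}

theorem IsInvariant.inf {U T : Submodule R E} (hU : U.IsInvariant G) (hT : T.IsInvariant G) :
    (U ⊓ T).IsInvariant G :=
  fun g hg x hx => ⟨hU g hg x hx.1, hT g hg x hx.2⟩

theorem mem_map_linearIsometryEquiv {U : Submodule R E} {k : E ≃ₗᵢ[R] E} {x : E} :
    x ∈ U.map (k : E →ₗ[R] E) ↔ k⁻¹ x ∈ U := by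
  constructor
  · rintro ⟨y, hy, rfl⟩
    simpa using hy
  · intro hx
    exact ⟨k⁻¹ x, hx, by simp⟩

theorem map_map_inv_linearIsometryEquiv (U : Submodule R E) (k : E ≃ₗᵢ[R] E) :
    (U.map ((k⁻¹ : E ≃ₗᵢ[R] E) : E →ₗ[R] E)).map (k : E →ₗ[R] E) = U := by
  ext x
  simp only [mem_map_linearIsometryEquiv, inv_inv, LinearIsometryEquiv.coe_inv,
    LinearIsometryEquiv.apply_symm_apply]

theorem map_one_linearIsometryEquiv (U : Submodule R E) :
    U.map ((1 : E ≃ₗᵢ[R] E) : E →ₗ[R] E) = U :=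
  U.map_id

theorem map_mul_linearIsometryEquiv (U : Submodule R E) (k k' : E ≃ₗᵢ[R] E) :
    U.map ((k * k' : E ≃ₗᵢ[R] E) : E →ₗ[R] E) =
      (U.map (k' : E →ₗ[R] E)).map (k : E →ₗ[R] E) :=
  U.map_comp (k' : E →ₗ[R] E) (k : E →ₗ[R] E)

theorem IsInvariant.map_of_mem_normalizer {U : Submodule R E} (hU : U.IsInvariant G)
    {k : E ≃ₗᵢ[R] E} (hk : k ∈ Subgroup.normalizer (G : Set (E ≃ₗᵢ[R] E))) :
    (U.map (k : E →ₗ[R] E)).IsInvariant G := by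
  intro g hg x hx
  rw [mem_map_linearIsometryEquiv] at hx ⊢
  simpa using hU _ ((Subgroup.mem_normalizer_iff''.mp hk g).mp hg) _ hx

theorem IsMinimalInvariant.map_of_mem_normalizer {U : Submodule R E}
    (hU : U.IsMinimalInvariant G) {k : E ≃ₗᵢ[R] E}
    (hk : k ∈ Subgroup.normalizer (G : Set (E ≃ₗᵢ[R] E))) :
    (U.map (k : E →ₗ[R] E)).IsMinimalInvariant G := by
  obtain ⟨hU0, hUinv, hUmin⟩ := hU
  refine ⟨by simpa using hU0, hUinv.map_of_mem_normalizer hk, fun T hTU hT => ?_⟩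
  have hle : T.map ((k⁻¹ : E ≃ₗᵢ[R] E) : E →ₗ[R] E) ≤ U := fun x hx => by
    rw [mem_map_linearIsometryEquiv, inv_inv] at hx
    simpa [mem_map_linearIsometryEquiv] using hTU hx
  rcases hUmin _ hle (hT.map_of_mem_normalizer (inv_mem hk)) with h | h
  · left; rw [← map_map_inv_linearIsometryEquiv T k, h, map_bot]
  · right; rw [← map_map_inv_linearIsometryEquiv T k, h]

end Submodule

namespace PiLp

variable (𝕜 : Type*) (p : ENNReal) {ι : Type*} (β : ι → Type*) [Ring 𝕜]
  [∀ i, SeminormedAddCommGroup (β i)] [∀ i, Module 𝕜 (β i)]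

def block (i : ι) : Submodule 𝕜 (PiLp p β) where
  carrier := {x | ∀ j, j ≠ i → x j = 0}
  add_mem' hx hy j hj := by simp [hx j hj, hy j hj]
  zero_mem' _ _ := rfl
  smul_mem' c x hx j hj := by simp [hx j hj]

variable {𝕜 p β}

theorem mem_block {i : ι} {x : PiLp p β} : x ∈ block 𝕜 p β i ↔ ∀ j, j ≠ i → x j = 0 :=
  Iff.rfl

variable [DecidableEq ι]

theorem single_mem_block (i : ι) (v : β i) : single p i v ∈ block 𝕜 p β i :=
  fun _ hj => single_eq_of_ne p hj v

theorem eq_single_of_mem_block {i : ι} {x : PiLp p β} (hx : x ∈ block 𝕜 p β i) :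
    x = single p i (x i) := by
  refine PiLp.ext fun j => ?_
  rcases eq_or_ne j i with rfl | hj
  · rw [single_eq_same]
  · rw [hx j hj, single_eq_of_ne p hj]

theorem block_injective [∀ i, Nontrivial (β i)] : Function.Injective (block 𝕜 p β) := by
  intro i j hij
  by_contra hne
  obtain ⟨v, hv⟩ := exists_ne (0 : β i)
  have := (hij ▸ single_mem_block (𝕜 := 𝕜) (p := p) i v : single p i v ∈ block 𝕜 p β j) i hne
  exact hv (by simpa using this)

variable [Fintype ι]

theorem univ_sum_single (x : PiLp p β) : ∑ i, single p i (x i) = x := by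
  ext j
  simp [Finset.sum_apply]

variable [Fact (1 ≤ p)] in
noncomputable def blockEquiv (i : ι) : block 𝕜 p β i ≃ₗᵢ[𝕜] β i where
  toFun x := (x : PiLp p β) i
  invFun v := ⟨single p i v, single_mem_block i v⟩
  map_add' _ _ := rfl
  map_smul' _ _ := rfl
  left_inv x := Subtype.ext (eq_single_of_mem_block x.2).symm
  right_inv v := single_eq_same p i v
  norm_map' x := by
    change ‖(x : PiLp p β) i‖ = ‖(x : PiLp p β)‖
    rw [← norm_single p β i, ← eq_single_of_mem_block x.2]

end PiLp

section BlockDiagonal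

open PiLp Submodule

variable {m : ℕ} {V : Fin m → Type*} [∀ i, NormedAddCommGroup (V i)]
  [∀ i, InnerProductSpace ℂ (V i)]

theorem blockDiagEmbed_apply (u : ∀ i, V i ≃ₗᵢ[ℂ] V i) (x : PiLp 2 V) (j : Fin m) :
    blockDiagEmbed V u x j = u j (x j) := rfl

theorem blockDiagEmbed_injective : Function.Injective (blockDiagEmbed V) := by
  intro u u' h
  funext i
  ext v
  simpa [blockDiagEmbed_apply] using congr($h (single 2 i v) i)

variable (H : ∀ i, Subgroup (V i ≃ₗᵢ[ℂ] V i))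

noncomputable abbrev blockDiagSubgroup : Subgroup (PiLp 2 V ≃ₗᵢ[ℂ] PiLp 2 V) :=
  (Subgroup.pi Set.univ H).map (blockDiagEmbed V)

theorem blockDiagEmbed_mulSingle_mem {k : Fin m} {h : V k ≃ₗᵢ[ℂ] V k} (hh : h ∈ H k) :
    blockDiagEmbed V (Pi.mulSingle k h) ∈ blockDiagSubgroup H :=
  Subgroup.mem_map_of_mem _ (Subgroup.mulSingle_mem_pi _ _ |>.mpr fun _ => hh)

theorem block_isInvariant (i : Fin m) :
    (block ℂ 2 V i).IsInvariant (blockDiagSubgroup H) := by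
  rintro _ ⟨u, -, rfl⟩ x hx j hj
  rw [blockDiagEmbed_apply, hx j hj, map_zero]

theorem Submodule.IsInvariant.map_projₗ {U : Submodule ℂ (PiLp 2 V)}
    (hU : U.IsInvariant (blockDiagSubgroup H)) (k : Fin m) :
    (U.map (projₗ 2 V k : PiLp 2 V →ₗ[ℂ] V k)).IsInvariant (H k) := by
  rintro h hh _ ⟨x, hx, rfl⟩
  exact ⟨_, hU _ (blockDiagEmbed_mulSingle_mem H hh) x hx, by simp [blockDiagEmbed_apply]⟩

theorem blockDiagEmbed_mulSingle_sub_self_mem_block (k : Fin m) (h : V k ≃ₗᵢ[ℂ] V k)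
    (x : PiLp 2 V) : blockDiagEmbed V (Pi.mulSingle k h) x - x ∈ block ℂ 2 V k := by
  intro j hj
  simp [blockDiagEmbed_apply, Pi.mulSingle_eq_of_ne hj]

theorem block_isMinimalInvariant {i : Fin m} [Nontrivial (V i)]
    (hirr : ∀ W : Submodule ℂ (V i), W.IsInvariant (H i) → W = ⊥ ∨ W = ⊤) :
    (block ℂ 2 V i).IsMinimalInvariant (blockDiagSubgroup H) := by
  refine ⟨?_, block_isInvariant H i, fun T hT hTinv => ?_⟩
  · obtain ⟨v, hv⟩ := exists_ne (0 : V i)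
    exact (Submodule.ne_bot_iff _).mpr ⟨_, single_mem_block i v, by simpa using hv⟩
  rcases hirr _ (hTinv.map_projₗ H i) with h | h
  · refine .inl ((Submodule.eq_bot_iff _).mpr fun x hx => ?_)
    have hxi : x i = 0 := (mem_bot ℂ).mp (h ▸ mem_map_of_mem hx)
    rw [eq_single_of_mem_block (hT hx), hxi]
    exact (single_eq_zero_iff 2 i).mpr rfl
  · refine .inr (le_antisymm hT fun y hy => ?_)
    obtain ⟨x, hx, hxy⟩ := mem_map.mp (h ▸ mem_top : y i ∈ T.map (projₗ 2 V i))
    rwa [eq_single_of_mem_block hy, ← hxy, projₗ_apply, ← eq_single_of_mem_block (hT hx)]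

theorem exists_eq_block_of_isMinimalInvariant
    (hirr : ∀ i, ∀ W : Submodule ℂ (V i), W.IsInvariant (H i) → W = ⊥ ∨ W = ⊤)
    (hnt : ∀ i, ∃ h ∈ H i, ∃ v : V i, h v ≠ v) {U : Submodule ℂ (PiLp 2 V)}
    (hU : U.IsMinimalInvariant (blockDiagSubgroup H)) :
    ∃ k, U = block ℂ 2 V k := by
  obtain ⟨hU0, hUinv, hUmin⟩ := hU
  obtain ⟨x, hxU, hx0⟩ := (Submodule.ne_bot_iff U).mp hU0
  obtain ⟨k, hxk⟩ : ∃ k, x k ≠ 0 := by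
    by_contra! h
    exact hx0 (PiLp.ext h)
  have hproj : U.map (projₗ 2 V k : PiLp 2 V →ₗ[ℂ] V k) = ⊤ :=
    (hirr k _ (hUinv.map_projₗ H k)).resolve_left fun h =>
      hxk ((mem_bot ℂ).mp (h ▸ mem_map_of_mem hxU))
  obtain ⟨h, hh, v, hv⟩ := hnt k
  obtain ⟨z, hzU, rfl⟩ := mem_map.mp (hproj ▸ mem_top : v ∈ U.map (projₗ 2 V k))
  set y := blockDiagEmbed V (Pi.mulSingle k h) z - z
  have hy : y ∈ U ⊓ block ℂ 2 V k :=
    ⟨sub_mem (hUinv _ (blockDiagEmbed_mulSingle_mem H hh) z hzU) hzU,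
      blockDiagEmbed_mulSingle_sub_self_mem_block k h z⟩
  have hy0 : y ≠ 0 := fun hy0 => hv (by
    simpa [y, blockDiagEmbed_apply, sub_eq_zero] using congr($hy0 k))
  have hUk : U ≤ block ℂ 2 V k := by
    rcases hUmin _ inf_le_left (hUinv.inf (block_isInvariant H k)) with hbot | hUk
    · exact absurd ((mem_bot ℂ).mp (hbot ▸ hy)) hy0
    · exact hUk ▸ inf_le_right
  have : Nontrivial (V k) := nontrivial_of_ne _ _ hxk
  exact ⟨k, (((block_isMinimalInvariant H (hirr k)).2.2 U hUk hUinv).resolve_left hU0)⟩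

theorem nontrivial_of_exists_apply_ne (hnt : ∀ i, ∃ h ∈ H i, ∃ v : V i, h v ≠ v) (i : Fin m) :
    Nontrivial (V i) := by
  obtain ⟨h, -, v, hv⟩ := hnt i
  exact nontrivial_of_ne v 0 fun hv0 => hv (by rw [hv0, map_zero])

theorem exists_map_block_eq
    (hirr : ∀ i, ∀ W : Submodule ℂ (V i), W.IsInvariant (H i) → W = ⊥ ∨ W = ⊤)
    (hnt : ∀ i, ∃ h ∈ H i, ∃ v : V i, h v ≠ v) {g : PiLp 2 V ≃ₗᵢ[ℂ] PiLp 2 V}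
    (hg : g ∈ Subgroup.normalizer
      (blockDiagSubgroup H : Set (PiLp 2 V ≃ₗᵢ[ℂ] PiLp 2 V)))
    (i : Fin m) : ∃ j, (block ℂ 2 V i).map (g : PiLp 2 V →ₗ[ℂ] PiLp 2 V) = block ℂ 2 V j :=
  have := nontrivial_of_exists_apply_ne H hnt i
  exists_eq_block_of_isMinimalInvariant H hirr hnt
    ((block_isMinimalInvariant H (hirr i)).map_of_mem_normalizer hg)

theorem exists_blockPerm
    (hirr : ∀ i, ∀ W : Submodule ℂ (V i), W.IsInvariant (H i) → W = ⊥ ∨ W = ⊤)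
    (hnt : ∀ i, ∃ h ∈ H i, ∃ v : V i, h v ≠ v) :
    ∃ φ : Subgroup.normalizer
        (blockDiagSubgroup H : Set (PiLp 2 V ≃ₗᵢ[ℂ] PiLp 2 V)) →*
        Equiv.Perm (Fin m),
      ∀ (g : Subgroup.normalizer (blockDiagSubgroup H : Set (PiLp 2 V ≃ₗᵢ[ℂ] PiLp 2 V))) i,
        (block ℂ 2 V i).map ((g : PiLp 2 V ≃ₗᵢ[ℂ] PiLp 2 V) : PiLp 2 V →ₗ[ℂ] PiLp 2 V) =
        block ℂ 2 V (φ g i) := by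
  have := nontrivial_of_exists_apply_ne H hnt
  choose σ hσ using
    fun (g : Subgroup.normalizer (blockDiagSubgroup H : Set (PiLp 2 V ≃ₗᵢ[ℂ] PiLp 2 V))) i =>
      exists_map_block_eq H hirr hnt g.2 i
  have hblock : Function.Injective (block ℂ 2 V) := block_injective
  have hσ_inj (g) : Function.Injective (σ g) := fun i i' h =>
    hblock <| map_injective_of_injective g.1.injective <| (hσ g i).trans (h ▸ (hσ g i').symm)
  refine ⟨{ toFun g := Equiv.ofBijective (σ g) (hσ_inj g).bijective_of_finite
            map_one' := Equiv.ext fun i => hblock ?_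
            map_mul' g g' := Equiv.ext fun i => hblock ?_ }, hσ⟩
  · rw [Equiv.ofBijective_apply, ← hσ, Equiv.Perm.one_apply]
    exact map_one_linearIsometryEquiv _
  · rw [Equiv.ofBijective_apply, ← hσ, Subgroup.coe_mul, map_mul_linearIsometryEquiv, hσ, hσ]
    rfl

theorem exists_blockDiagEmbed_eq_of_map_block_eq {g : PiLp 2 V ≃ₗᵢ[ℂ] PiLp 2 V}
    (hg : ∀ i, (block ℂ 2 V i).map (g : PiLp 2 V →ₗ[ℂ] PiLp 2 V) = block ℂ 2 V i) :
    ∃ u, blockDiagEmbed V u = g := by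
  let u i : V i ≃ₗᵢ[ℂ] V i := (blockEquiv i).symm.trans <|
    (g.submoduleMap _).trans <| (LinearIsometryEquiv.ofEq _ _ (hg i)).trans (blockEquiv i)
  have hmem (i) (v : V i) : g (single 2 i v) ∈ block ℂ 2 V i :=
    hg i ▸ mem_map_of_mem (single_mem_block i v)
  refine ⟨u, LinearIsometryEquiv.ext fun x => PiLp.ext fun j => ?_⟩
  conv_rhs => rw [← univ_sum_single x, map_sum, WithLp.ofLp_sum, Finset.sum_apply]
  rw [Finset.sum_eq_single j (fun k _ hk => hmem k (x k) j (Ne.symm hk)) (by simp)]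
  rfl

theorem mem_map_pi_normalizer_of_map_block_eq {g : PiLp 2 V ≃ₗᵢ[ℂ] PiLp 2 V}
    (hg : g ∈ Subgroup.normalizer
      (blockDiagSubgroup H : Set (PiLp 2 V ≃ₗᵢ[ℂ] PiLp 2 V)))
    (hblock : ∀ i, (block ℂ 2 V i).map (g : PiLp 2 V →ₗ[ℂ] PiLp 2 V) = block ℂ 2 V i) :
    g ∈ (Subgroup.pi Set.univ fun i => Subgroup.normalizer (H i : Set (V i ≃ₗᵢ[ℂ] V i))).map
      (blockDiagEmbed V) := by
  obtain ⟨u, rfl⟩ := exists_blockDiagEmbed_eq_of_map_block_eq hblock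
  exact Subgroup.mem_map_of_mem _ <| Subgroup.normalizer_pi_le H <|
    Subgroup.mem_normalizer_of_map_mem_normalizer blockDiagEmbed_injective hg

end BlockDiagonal

theorem normalizer_quotient_finite_of_totally_decomposed_general {m : ℕ} (V : Fin m → Type*)
    [∀ i, NormedAddCommGroup (V i)] [∀ i, InnerProductSpace ℂ (V i)]
    (H : ∀ i, Subgroup (V i ≃ₗᵢ[ℂ] V i))
    (hirr : ∀ i, ∀ W : Submodule ℂ (V i),
      (∀ h ∈ H i, ∀ v ∈ W, h v ∈ W) → W = ⊥ ∨ W = ⊤)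
    (hnt : ∀ i, ∃ h ∈ H i, ∃ v : V i, h v ≠ v) :
    0 < Subgroup.relIndex
        (Subgroup.map (blockDiagEmbed V)
          (Subgroup.pi Set.univ fun i => Subgroup.normalizer (H i : Set (V i ≃ₗᵢ[ℂ] V i))))
        (Subgroup.normalizer
          ((Subgroup.map (blockDiagEmbed V) (Subgroup.pi Set.univ H) : Subgroup (PiLp 2 V ≃ₗᵢ[ℂ] PiLp 2 V)) :
            Set (PiLp 2 V ≃ₗᵢ[ℂ] PiLp 2 V))) ∧
    Subgroup.relIndex
        (Subgroup.map (blockDiagEmbed V)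
          (Subgroup.pi Set.univ fun i => Subgroup.normalizer (H i : Set (V i ≃ₗᵢ[ℂ] V i))))
        (Subgroup.normalizer
          ((Subgroup.map (blockDiagEmbed V) (Subgroup.pi Set.univ H) : Subgroup (PiLp 2 V ≃ₗᵢ[ℂ] PiLp 2 V)) :
            Set (PiLp 2 V ≃ₗᵢ[ℂ] PiLp 2 V))) ≤
      Nat.factorial m := by
  obtain ⟨φ, hφ⟩ := exists_blockPerm H hirr hnt
  have hker : φ.ker ≤ (Subgroup.map (blockDiagEmbed V) (Subgroup.pi Set.univ fun i =>
      Subgroup.normalizer (H i : Set (V i ≃ₗᵢ[ℂ] V i)))).subgroupOf _ := fun g hg =>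
    Subgroup.mem_subgroupOf.mpr <| mem_map_pi_normalizer_of_map_block_eq H g.2 fun i => by
      rw [hφ, MonoidHom.mem_ker.mp hg, Equiv.Perm.one_apply]
  obtain ⟨hne, hle⟩ := Subgroup.index_ne_zero_and_le_card_of_ker_le φ hker
  exact ⟨Nat.pos_of_ne_zero hne, hle.trans_eq (by rw [Nat.card_perm, Nat.card_fin])⟩

/-- Normalizer lemma: if each `Hᵢ°` acts irreducibly and non-trivially on `Vᵢ`, then the
product of the normalizers `N_{U(Vᵢ)}(Hᵢ°)` has finite index, at most `m!`, in the
normalizer of `H° = H₁° × ⋯ × H_m°` inside the unitary group of `V = V₁ ⊕ ⋯ ⊕ V_m`. -/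
theorem normalizer_quotient_finite_of_totally_decomposed {m : ℕ} (V : Fin m → Type*)
    [∀ i, NormedAddCommGroup (V i)] [∀ i, InnerProductSpace ℂ (V i)]
    [∀ i, FiniteDimensional ℂ (V i)]
    (H : ∀ i, Subgroup (V i ≃ₗᵢ[ℂ] V i))
    (hirr : ∀ i, ∀ W : Submodule ℂ (V i),
      (∀ h ∈ H i, ∀ v ∈ W, h v ∈ W) → W = ⊥ ∨ W = ⊤)
    (hnt : ∀ i, ∃ h ∈ H i, ∃ v : V i, h v ≠ v) :
    0 < Subgroup.relIndex
        (Subgroup.map (blockDiagEmbed V)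
          (Subgroup.pi Set.univ fun i => Subgroup.normalizer (H i : Set (V i ≃ₗᵢ[ℂ] V i))))
        (Subgroup.normalizer
          ((Subgroup.map (blockDiagEmbed V) (Subgroup.pi Set.univ H) : Subgroup (PiLp 2 V ≃ₗᵢ[ℂ] PiLp 2 V)) :
            Set (PiLp 2 V ≃ₗᵢ[ℂ] PiLp 2 V))) ∧
    Subgroup.relIndex
        (Subgroup.map (blockDiagEmbed V)
          (Subgroup.pi Set.univ fun i => Subgroup.normalizer (H i : Set (V i ≃ₗᵢ[ℂ] V i))))
        (Subgroup.normalizer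
          ((Subgroup.map (blockDiagEmbed V) (Subgroup.pi Set.univ H) : Subgroup (PiLp 2 V ≃ₗᵢ[ℂ] PiLp 2 V)) :
            Set (PiLp 2 V ≃ₗᵢ[ℂ] PiLp 2 V))) ≤
      Nat.factorial m :=
  normalizer_quotient_finite_of_totally_decomposed_general V H hirr hnt
end

section
/- Let V be a finite-dimensional complex Hermitian vector space and f a positive self-adjoint endomorphism of V (⟨f(v),v⟩ > 0 for all v ≠ 0). Then for any integers p, q ≥ 0 with p + q ≥ 1, the endomorphism f^{⊠p} ⊗ id_{(V*)^{⊗q}} of V^{⊗p} ⊗ (V*)^{⊗q} is semipositive and bounded above by p·(dim V)^{p−1}·tr(f) times the identity. -/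
/-!
Diagonalise `f` in an orthonormal eigenbasis `(v k)` with eigenvalues `λ k ≥ 0`. Together with
an orthonormal basis `(w l)` of `W₂`, the vectors `v (J 1) ⊗ ⋯ ⊗ v (J p) ⊗ w l` form an orthonormal
eigenbasis of `f^{⊠p} ⊗ id` with eigenvalues `∑ i, λ (J i)`. These lie between `0` and
`p · tr f ≤ p · (dim V)^{p-1} · tr f`, and an operator that is diagonal in an orthonormal basis
with eigenvalues in `[0, C]` is semipositive and bounded above by `C · id`.
-/

open scoped TensorProduct InnerProductSpace ComplexOrder

/-- The box-power `f^{⊠p} = Σᵢ id^{⊗(i−1)} ⊗ f ⊗ id^{⊗(p−i)}` on the `p`-th tensor power. -/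
noncomputable def boxPow {K V : Type*} [CommSemiring K] [AddCommMonoid V] [Module K V]
    (p : ℕ) (f : V →ₗ[K] V) : (⨂[K]^p V) →ₗ[K] ⨂[K]^p V :=
  ∑ i : Fin p, PiTensorProduct.map (fun j => if j = i then f else LinearMap.id)

theorem boxPow_tprod_of_apply_eq_smul {K V : Type*} [CommSemiring K] [AddCommMonoid V]
    [Module K V] {p : ℕ} {f : V →ₗ[K] V} {v : Fin p → V} {c : Fin p → K}
    (hv : ∀ i, f (v i) = c i • v i) :
    boxPow p f (PiTensorProduct.tprod K v) = (∑ i, c i) • PiTensorProduct.tprod K v := by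
  simp only [boxPow, LinearMap.sum_apply, PiTensorProduct.map_tprod, Finset.sum_smul]
  refine Finset.sum_congr rfl fun i _ => ?_
  have hupdate : (fun j => (if j = i then f else LinearMap.id) (v j)) =
      Function.update v i (c i • v i) := by
    funext j
    by_cases hj : j = i <;> simp [hj, hv]
  rw [hupdate, MultilinearMap.map_update_smul, Function.update_eq_self]

theorem conj_map_boxPow_id_tprod_tmul {K V W₁ W₂ W : Type*} [CommSemiring K]
    [AddCommMonoid V] [Module K V] [AddCommMonoid W₁] [Module K W₁]
    [AddCommMonoid W₂] [Module K W₂] [AddCommMonoid W] [Module K W]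
    {p : ℕ} {f : V →ₗ[K] V} (e₁ : (⨂[K]^p V) ≃ₗ[K] W₁) (e : (W₁ ⊗[K] W₂) ≃ₗ[K] W)
    {v : Fin p → V} {c : Fin p → K} (hv : ∀ i, f (v i) = c i • v i) (w : W₂) :
    (e.toLinearMap ∘ₗ
      (TensorProduct.map (e₁.toLinearMap ∘ₗ boxPow p f ∘ₗ e₁.symm.toLinearMap)
        LinearMap.id) ∘ₗ e.symm.toLinearMap) (e (e₁ (PiTensorProduct.tprod K v) ⊗ₜ w)) =
      (∑ i, c i) • e (e₁ (PiTensorProduct.tprod K v) ⊗ₜ w) := by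
  simp [boxPow_tprod_of_apply_eq_smul hv, ← TensorProduct.smul_tmul']

theorem orthonormal_tprod_comp {σ ι V W : Type*} [Fintype σ]
    [NormedAddCommGroup V] [InnerProductSpace ℂ V] [NormedAddCommGroup W] [InnerProductSpace ℂ W]
    {e : (⨂[ℂ] _ : σ, V) → W}
    (he : ∀ v w : σ → V, ⟪e (PiTensorProduct.tprod ℂ v), e (PiTensorProduct.tprod ℂ w)⟫_ℂ =
      ∏ i, ⟪v i, w i⟫_ℂ)
    {b : ι → V} (hb : Orthonormal ℂ b) :
    Orthonormal ℂ fun J : σ → ι => e (PiTensorProduct.tprod ℂ (b ∘ J)) := by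
  classical
  rw [orthonormal_iff_ite] at hb ⊢
  intro J J'
  simp only [he, Function.comp_apply, hb, Finset.prod_boole, Finset.mem_univ, true_implies,
    funext_iff]

theorem orthonormal_tmul {ι κ W₁ W₂ W : Type*}
    [NormedAddCommGroup W₁] [InnerProductSpace ℂ W₁]
    [NormedAddCommGroup W₂] [InnerProductSpace ℂ W₂]
    [NormedAddCommGroup W] [InnerProductSpace ℂ W] {e : W₁ ⊗[ℂ] W₂ → W}
    (he : ∀ (x₁ y₁ : W₁) (x₂ y₂ : W₂),
      ⟪e (x₁ ⊗ₜ x₂), e (y₁ ⊗ₜ y₂)⟫_ℂ = ⟪x₁, y₁⟫_ℂ * ⟪x₂, y₂⟫_ℂ)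
    {v₁ : ι → W₁} {v₂ : κ → W₂} (h₁ : Orthonormal ℂ v₁) (h₂ : Orthonormal ℂ v₂) :
    Orthonormal ℂ fun ik : ι × κ => e (v₁ ik.1 ⊗ₜ v₂ ik.2) := by
  classical
  rw [orthonormal_iff_ite] at h₁ h₂ ⊢
  rintro ⟨i, k⟩ ⟨i', k'⟩
  simp only [he, h₁, h₂, Prod.mk.injEq, ite_zero_mul_ite_zero, mul_one]

theorem exists_orthonormalBasis_tprod_tmul {σ ι κ V W₁ W₂ W : Type*}
    [Fintype σ] [DecidableEq σ] [Fintype ι] [Fintype κ]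
    [NormedAddCommGroup V] [InnerProductSpace ℂ V]
    [NormedAddCommGroup W₁] [InnerProductSpace ℂ W₁]
    [NormedAddCommGroup W₂] [InnerProductSpace ℂ W₂]
    [NormedAddCommGroup W] [InnerProductSpace ℂ W]
    {e₁ : (⨂[ℂ] _ : σ, V) ≃ₗ[ℂ] W₁}
    (he₁ : ∀ v w : σ → V, ⟪e₁ (PiTensorProduct.tprod ℂ v), e₁ (PiTensorProduct.tprod ℂ w)⟫_ℂ =
      ∏ i, ⟪v i, w i⟫_ℂ)
    {e : (W₁ ⊗[ℂ] W₂) ≃ₗ[ℂ] W}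
    (he : ∀ (x₁ y₁ : W₁) (x₂ y₂ : W₂),
      ⟪e (x₁ ⊗ₜ x₂), e (y₁ ⊗ₜ y₂)⟫_ℂ = ⟪x₁, y₁⟫_ℂ * ⟪x₂, y₂⟫_ℂ)
    (b : OrthonormalBasis ι ℂ V) (c : OrthonormalBasis κ ℂ W₂) :
    ∃ B : OrthonormalBasis ((σ → ι) × κ) ℂ W,
      ∀ Jk, B Jk = e (e₁ (PiTensorProduct.tprod ℂ (b ∘ Jk.1)) ⊗ₜ c Jk.2) := by
  let B := (((Basis.piTensorProduct fun _ => b.toBasis).map e₁).tensorProduct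
    c.toBasis).map e
  have hB : ⇑B = fun Jk => e (e₁ (PiTensorProduct.tprod ℂ (b ∘ Jk.1)) ⊗ₜ c Jk.2) := by
    funext Jk
    simp [B, Module.Basis.tensorProduct_apply']
    rfl
  have hBon : Orthonormal ℂ B := by
    rw [hB]
    exact orthonormal_tmul he (orthonormal_tprod_comp he₁ b.orthonormal) c.orthonormal
  exact ⟨B.toOrthonormalBasis hBon, fun Jk => by simp [hB]⟩

theorem LinearMap.isPositive_of_apply_eq_smul {ι E : Type*} [Fintype ι]
    [NormedAddCommGroup E] [InnerProductSpace ℂ E] (b : OrthonormalBasis ι ℂ E)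
    {T : E →ₗ[ℂ] E} {μ : ι → ℝ} (hμ : 0 ≤ μ) (hT : ∀ i, T (b i) = (μ i : ℂ) • b i) :
    T.IsPositive := by
  classical
  have hdiag : T.toMatrix b.toBasis b.toBasis = Matrix.diagonal fun i => (μ i : ℂ) := by
    ext i j
    rw [LinearMap.toMatrix_apply, OrthonormalBasis.coe_toBasis, hT,
      OrthonormalBasis.coe_toBasis_repr_apply, map_smul, b.repr_self]
    by_cases h : i = j <;> simp [h]
  rw [← LinearMap.posSemidef_toMatrix_iff b, hdiag]
  exact Matrix.PosSemidef.diagonal fun i => Complex.zero_le_real.2 (hμ i)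

theorem sum_comp_le_mul_card_pow_mul_sum {ι : Type*} [Fintype ι] {p : ℕ} {g : ι → ℝ}
    (hg : 0 ≤ g) (J : Fin p → ι) :
    ∑ i, g (J i) ≤ p * Fintype.card ι ^ (p - 1) * ∑ k, g k := by
  rcases p.eq_zero_or_pos with rfl | hp
  · simp
  have hcard : (1 : ℝ) ≤ Fintype.card ι ^ (p - 1) :=
    one_le_pow₀ (by exact_mod_cast Fintype.card_pos_iff.2 ⟨J ⟨0, hp⟩⟩)
  calc ∑ i, g (J i) ≤ ∑ _i : Fin p, ∑ k, g k :=
        Finset.sum_le_sum fun i _ => Finset.single_le_sum (fun k _ => hg k) (Finset.mem_univ _)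
    _ = p * 1 * ∑ k, g k := by simp
    _ ≤ p * Fintype.card ι ^ (p - 1) * ∑ k, g k := by
        gcongr
        exact Finset.sum_nonneg fun k _ => hg k

theorem boxPow_tensor_id_semipositive_le_general
    {V W₁ W₂ W : Type*}
    [NormedAddCommGroup V] [InnerProductSpace ℂ V] [FiniteDimensional ℂ V]
    [NormedAddCommGroup W₁] [InnerProductSpace ℂ W₁]
    [NormedAddCommGroup W₂] [InnerProductSpace ℂ W₂] [FiniteDimensional ℂ W₂]
    [NormedAddCommGroup W] [InnerProductSpace ℂ W]
    (p : ℕ)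
    (f : V →ₗ[ℂ] V)
    (hself : ∀ v w : V, ⟪f v, w⟫_ℂ = ⟪v, f w⟫_ℂ)
    (hpos : ∀ v : V, v ≠ 0 → 0 < ⟪f v, v⟫_ℂ)
    (e₁ : (⨂[ℂ]^p V) ≃ₗ[ℂ] W₁)
    (he₁ : ∀ v w : Fin p → V,
      ⟪e₁ (PiTensorProduct.tprod ℂ v), e₁ (PiTensorProduct.tprod ℂ w)⟫_ℂ =
        ∏ i, ⟪v i, w i⟫_ℂ)
    (e : (W₁ ⊗[ℂ] W₂) ≃ₗ[ℂ] W)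
    (he : ∀ (x₁ y₁ : W₁) (x₂ y₂ : W₂),
      ⟪e (x₁ ⊗ₜ x₂), e (y₁ ⊗ₜ y₂)⟫_ℂ = ⟪x₁, y₁⟫_ℂ * ⟪x₂, y₂⟫_ℂ)
    (F : W →ₗ[ℂ] W)
    (hF : F = e.toLinearMap ∘ₗ
      (TensorProduct.map (e₁.toLinearMap ∘ₗ boxPow p f ∘ₗ e₁.symm.toLinearMap)
        LinearMap.id) ∘ₗ e.symm.toLinearMap) :
    (∀ x : W, 0 ≤ ⟪F x, x⟫_ℂ) ∧
    (∀ x : W, 0 ≤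
      ⟪((p : ℂ) * (Module.finrank ℂ V : ℂ) ^ (p - 1) * LinearMap.trace ℂ V f) • x - F x,
        x⟫_ℂ) := by
  have hf : f.IsPositive := f.isPositive_iff.2
    ⟨hself, fun v => (eq_or_ne v 0).elim (fun h => by simp [h]) fun h => (hpos v h).le⟩
  set lam := hf.isSymmetric.eigenvalues rfl
  obtain ⟨b, hb⟩ := exists_orthonormalBasis_tprod_tmul he₁ he
    (hf.isSymmetric.eigenvectorBasis rfl) (stdOrthonormalBasis ℂ W₂)
  let μ : (Fin p → Fin (Module.finrank ℂ V)) × Fin (Module.finrank ℂ W₂) → ℝ :=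
    fun Jk => ∑ i, lam (Jk.1 i)
  have hFb : ∀ Jk, F (b Jk) = (μ Jk : ℂ) • b Jk := fun Jk => by
    rw [hb, hF, conj_map_boxPow_id_tprod_tmul e₁ e
      (v := hf.isSymmetric.eigenvectorBasis rfl ∘ Jk.1)
      (fun i => hf.isSymmetric.apply_eigenvectorBasis rfl (Jk.1 i)), Complex.ofReal_sum]
    rfl
  have hμ : 0 ≤ μ := fun Jk => Finset.sum_nonneg fun i _ => hf.nonneg_eigenvalues rfl _
  set C : ℝ := p * Module.finrank ℂ V ^ (p - 1) * ∑ k, lam k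
  have hC : (p : ℂ) * (Module.finrank ℂ V : ℂ) ^ (p - 1) * LinearMap.trace ℂ V f = C := by
    simp [C, hf.isSymmetric.trace_eq_sum_eigenvalues rfl, lam]
  have hμC : ∀ Jk, μ Jk ≤ C := fun Jk => by
    simpa using sum_comp_le_mul_card_pow_mul_sum (hf.nonneg_eigenvalues rfl) Jk.1
  have hCF : ((C : ℂ) • LinearMap.id - F).IsPositive :=
    LinearMap.isPositive_of_apply_eq_smul b (μ := fun Jk => C - μ Jk)
      (fun Jk => sub_nonneg.2 (hμC Jk)) fun Jk => by simp [hFb, sub_smul]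
  refine ⟨(LinearMap.isPositive_of_apply_eq_smul b hμ hFb).inner_nonneg_left, fun x => ?_⟩
  rw [hC]
  exact hCF.inner_nonneg_left x

/-- If `f` is a positive self-adjoint endomorphism of a finite-dimensional Hermitian space
`V`, then for `p + q ≥ 1` the endomorphism `f^{⊠p} ⊗ id` of `V^{⊗p} ⊗ (V*)^{⊗q}` (the
latter realized as a Hermitian space `W₂` of dimension `(dim V)^q` with the identity
operator, and the whole tensor product realized on a Hermitian space `W`) is semipositive
and bounded above by `p · (dim V)^{p−1} · tr f` times the identity. -/
theorem boxPow_tensor_id_semipositive_le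
    {V W₁ W₂ W : Type*}
    [NormedAddCommGroup V] [InnerProductSpace ℂ V] [FiniteDimensional ℂ V]
    [NormedAddCommGroup W₁] [InnerProductSpace ℂ W₁] [FiniteDimensional ℂ W₁]
    [NormedAddCommGroup W₂] [InnerProductSpace ℂ W₂] [FiniteDimensional ℂ W₂]
    [NormedAddCommGroup W] [InnerProductSpace ℂ W]
    (p q : ℕ) (hpq : 1 ≤ p + q)
    (f : V →ₗ[ℂ] V)
    (hself : ∀ v w : V, ⟪f v, w⟫_ℂ = ⟪v, f w⟫_ℂ)
    (hpos : ∀ v : V, v ≠ 0 → 0 < ⟪f v, v⟫_ℂ)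
    (e₁ : (⨂[ℂ]^p V) ≃ₗ[ℂ] W₁)
    (he₁ : ∀ v w : Fin p → V,
      ⟪e₁ (PiTensorProduct.tprod ℂ v), e₁ (PiTensorProduct.tprod ℂ w)⟫_ℂ =
        ∏ i, ⟪v i, w i⟫_ℂ)
    (hW₂ : Module.finrank ℂ W₂ = (Module.finrank ℂ V) ^ q)
    (e : (W₁ ⊗[ℂ] W₂) ≃ₗ[ℂ] W)
    (he : ∀ (x₁ y₁ : W₁) (x₂ y₂ : W₂),
      ⟪e (x₁ ⊗ₜ x₂), e (y₁ ⊗ₜ y₂)⟫_ℂ = ⟪x₁, y₁⟫_ℂ * ⟪x₂, y₂⟫_ℂ)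
    (F : W →ₗ[ℂ] W)
    (hF : F = e.toLinearMap ∘ₗ
      (TensorProduct.map (e₁.toLinearMap ∘ₗ boxPow p f ∘ₗ e₁.symm.toLinearMap)
        LinearMap.id) ∘ₗ e.symm.toLinearMap) :
    (∀ x : W, 0 ≤ ⟪F x, x⟫_ℂ) ∧
    (∀ x : W, 0 ≤
      ⟪((p : ℂ) * (Module.finrank ℂ V : ℂ) ^ (p - 1) * LinearMap.trace ℂ V f) • x - F x,
        x⟫_ℂ) :=
  boxPow_tensor_id_semipositive_le_general p f hself hpos e₁ he₁ e he F hF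
end
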